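/- Let G be a connected weighted graph, let 0 ≤ t ≤ 1/max_i k_i, and for each node i set μ_{t,i} := (I − tQ)·e_i (a probability vector on the nodes). Define the Wasserstein distance W₁(μ, ν) := min{ Σ_{x,y} P_{xy}·ω_{xy} : P an n×n matrix with nonnegative entries, row sums equal to μ and column sums equal to ν }. Then for every link (i,j): (a) W₁(μ_{t,i}, μ_{t,j}) ≤ ω_ij − 2t(p_i + p_j) + 2t²c_ij; and (b) if (i,j) is a cut link, then also W₁(μ_{t,i}, μ_{t,j}) ≥ ω_ij − 2t(p_i + p_j). Consequently, the Ollivier–Ricci curvature κ^{OR}_ij := lim_{t→0⁺}(1/t)(1 − W₁(μ_{t,i},μ_{t,j})/ω_ij) satisfies κ^{OR}_ij ≥ κ_ij, with equality when (i,j) is a cut link. -/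

import Mathlib

open Matrix Finset

set_option linter.unusedSectionVars false

variable {V : Type*}

open Classical in
noncomputable def lapMatrix [Fintype V] (G : SimpleGraph V) (c : V → V → ℝ) :
    Matrix V V ℝ :=
  Matrix.of fun i j =>
    if i = j then ∑ k, if G.Adj i k then c i k else 0
    else if G.Adj i j then -c i j else 0

section Basic
variable [Fintype V] [DecidableEq V] (G : SimpleGraph V) [DecidableRel G.Adj] (c : V → V → ℝ)

open Classical in
noncomputable def cc (i j : V) : ℝ := if G.Adj i j then c i j else 0

noncomputable def deg (i : V) : ℝ := ∑ k, cc G c i k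

lemma cc_self (i : V) : cc G c i i = 0 := by simp [cc]

lemma lap_apply (i j : V) :
    lapMatrix G c i j = (if i = j then deg G c i else 0) - cc G c i j := by
  by_cases h : i = j
  · subst h
    simp only [lapMatrix, of_apply, if_pos rfl, cc_self, sub_zero, deg]
    exact Finset.sum_congr rfl fun k _ => by by_cases hA : G.Adj i k <;> simp [hA, cc]
  · simp only [lapMatrix, of_apply, if_neg h, cc]
    by_cases ha : G.Adj i j <;> simp [ha]

variable {c} (hsymm : ∀ i j, c i j = c j i)

include hsymm in
lemma cc_symm (i j : V) : cc G c i j = cc G c j i := by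
  unfold cc
  by_cases h : G.Adj i j
  · rw [if_pos h, if_pos h.symm, hsymm]
  · rw [if_neg h, if_neg (fun hh => h hh.symm)]

include hsymm in
lemma lap_symm (i j : V) : lapMatrix G c i j = lapMatrix G c j i := by
  rw [lap_apply, lap_apply, cc_symm G hsymm]
  by_cases h : i = j
  · subst h; rfl
  · rw [if_neg h, if_neg (Ne.symm h)]

lemma lap_mulVec (x : V → ℝ) (u : V) :
    (lapMatrix G c *ᵥ x) u = ∑ v, cc G c u v * (x u - x v) := by
  simp only [mulVec, dotProduct, lap_apply, sub_mul, ite_mul, zero_mul,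
    Finset.sum_sub_distrib, Finset.sum_ite_eq, Finset.mem_univ, if_true, mul_sub]
  rw [deg, Finset.sum_mul]

variable (hpos : ∀ i j, G.Adj i j → 0 < c i j)

include hpos in
lemma cc_nonneg (i j : V) : 0 ≤ cc G c i j := by
  unfold cc; split
  · exact le_of_lt (hpos _ _ (by assumption))
  · exact le_refl 0

include hsymm in
lemma quad_eq (x : V → ℝ) :
    2 * (x ⬝ᵥ lapMatrix G c *ᵥ x) = ∑ u, ∑ v, cc G c u v * (x u - x v) ^ 2 := by
  have h1 : x ⬝ᵥ lapMatrix G c *ᵥ x = ∑ u, ∑ v, cc G c u v * (x u * (x u - x v)) := by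
    simp only [dotProduct, lap_mulVec, Finset.mul_sum]
    exact Finset.sum_congr rfl fun u _ => Finset.sum_congr rfl fun v _ => by ring
  have h2 : x ⬝ᵥ lapMatrix G c *ᵥ x = ∑ u, ∑ v, cc G c u v * (-x v * (x u - x v)) := by
    rw [h1, Finset.sum_comm]
    exact Finset.sum_congr rfl fun u _ => Finset.sum_congr rfl fun v _ => by
      rw [cc_symm G hsymm]; ring
  calc 2 * (x ⬝ᵥ lapMatrix G c *ᵥ x)
      = (∑ u, ∑ v, cc G c u v * (x u * (x u - x v)))
        + ∑ u, ∑ v, cc G c u v * (-x v * (x u - x v)) := by rw [← h1, ← h2]; ring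
    _ = _ := by
        rw [← Finset.sum_add_distrib]
        exact Finset.sum_congr rfl fun u _ => by
          rw [← Finset.sum_add_distrib]
          exact Finset.sum_congr rfl fun v _ => by ring

include hsymm hpos in
lemma quad_nonneg (x : V → ℝ) : 0 ≤ x ⬝ᵥ lapMatrix G c *ᵥ x := by
  have h := quad_eq G hsymm x
  nlinarith [Finset.sum_nonneg (fun u (_ : u ∈ Finset.univ) =>
    Finset.sum_nonneg (fun v (_ : v ∈ Finset.univ) =>
      mul_nonneg (cc_nonneg G hpos u v) (sq_nonneg (x u - x v))))]

include hsymm hpos in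
lemma quad_zero_adj {x : V → ℝ} (h : x ⬝ᵥ lapMatrix G c *ᵥ x = 0) :
    ∀ u v, G.Adj u v → x u = x v := by
  intro u v huv
  have hq := quad_eq G hsymm x
  rw [h, mul_zero] at hq
  have t1 : cc G c u v * (x u - x v)^2 ≤ ∑ b, cc G c u b * (x u - x b)^2 :=
    Finset.single_le_sum (f := fun b => cc G c u b * (x u - x b)^2)
      (fun b _ => mul_nonneg (cc_nonneg G hpos u b) (sq_nonneg _)) (Finset.mem_univ v)
  have t2 : (∑ b, cc G c u b * (x u - x b)^2) ≤ ∑ a, ∑ b, cc G c a b * (x a - x b)^2 :=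
    Finset.single_le_sum (f := fun a => ∑ b, cc G c a b * (x a - x b)^2)
      (fun a _ => Finset.sum_nonneg fun b _ =>
      mul_nonneg (cc_nonneg G hpos a b) (sq_nonneg _)) (Finset.mem_univ u)
  have hc : 0 < cc G c u v := by unfold cc; rw [if_pos huv]; exact hpos _ _ huv
  have heq0 : cc G c u v * (x u - x v)^2 = 0 :=
    le_antisymm (by linarith) (mul_nonneg hc.le (sq_nonneg _))
  have hs : (x u - x v)^2 = 0 := (mul_eq_zero.mp heq0).resolve_left hc.ne'
  have := pow_eq_zero_iff (n := 2) (by norm_num) |>.mp hs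
  linarith [sub_eq_zero.mp this]

include hsymm hpos in
lemma lap_ker (hconn : G.Connected) {x : V → ℝ} (h : lapMatrix G c *ᵥ x = 0) :
    ∀ u v, x u = x v := by
  have hadj : ∀ u v, G.Adj u v → x u = x v := by
    apply quad_zero_adj G hsymm hpos
    rw [h, dotProduct_zero]
  intro u v
  rcases (hconn.preconnected u v) with ⟨p⟩
  induction p with
  | nil => rfl
  | cons ha p ih => exact (hadj _ _ ha).trans ih

lemma lap_mulVec_const (a : ℝ) : lapMatrix G c *ᵥ (fun _ => a) = 0 := by
  funext u
  rw [lap_mulVec]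
  simp

lemma lap_mulVec_one : lapMatrix G c *ᵥ (fun _ => (1:ℝ)) = 0 := lap_mulVec_const G 1

include hsymm in
lemma col_sum_lap (w : V) : ∑ u, lapMatrix G c u w = 0 := by
  have := congrFun (lap_mulVec_const G (c := c) 1) w
  simp only [lap_mulVec, Pi.zero_apply] at this
  calc ∑ u, lapMatrix G c u w = ∑ u, lapMatrix G c w u := by
        exact Finset.sum_congr rfl fun u _ => lap_symm G hsymm u w
    _ = (lapMatrix G c *ᵥ (fun _ => (1:ℝ))) w := by
        simp [mulVec, dotProduct]
    _ = 0 := by rw [lap_mulVec_const]; rfl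

end Basic

section Penrose

def IsMoorePenroseInv [Fintype V] (Q Qd : Matrix V V ℝ) : Prop :=
  Q * Qd * Q = Q ∧ Qd * Q * Qd = Qd ∧ (Q * Qd)ᵀ = Q * Qd ∧ (Qd * Q)ᵀ = Qd * Q

variable [Fintype V] [DecidableEq V] (G : SimpleGraph V) [DecidableRel G.Adj]
  {c : V → V → ℝ}

variable (hsymm : ∀ i j, c i j = c j i) (hpos : ∀ i j, G.Adj i j → 0 < c i j)
  (hconn : G.Connected) {Qd : Matrix V V ℝ} (hQd : IsMoorePenroseInv (lapMatrix G c) Qd)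

include hsymm hpos hconn hQd in
lemma QdQ_mulVec (x : V → ℝ) (u : V) :
    ((Qd * lapMatrix G c) *ᵥ x) u = x u - (∑ w, x w) / (Fintype.card V : ℝ) := by
  set Q := lapMatrix G c with hQ
  set z : V → ℝ := x - (Qd * Q) *ᵥ x with hz
  have hker : Q *ᵥ z = 0 := by
    rw [hz, mulVec_sub, mulVec_mulVec, ← Matrix.mul_assoc, hQd.1, sub_self]
  have hconst : ∀ a b, z a = z b := lap_ker G hsymm hpos hconn hker
  -- column sums of Qd * Q vanish
  have hcol : ∀ w, ∑ u, (Qd * Q) u w = 0 := by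
    intro w
    have h1 : ∀ u, (Qd * Q) u w = (Qd * Q) w u :=
      fun u => (congrFun (congrFun hQd.2.2.2 u) w).symm
    calc ∑ u, (Qd * Q) u w = ∑ u, (Qd * Q) w u := Finset.sum_congr rfl fun u _ => h1 u
      _ = ((Qd * Q) *ᵥ (fun _ => (1:ℝ))) w := by simp [mulVec, dotProduct]
      _ = (Qd *ᵥ (Q *ᵥ (fun _ => (1:ℝ)))) w := by rw [← mulVec_mulVec]
      _ = 0 := by rw [hQ, lap_mulVec_const]; simp
  have hsumz : ∑ w, z w = ∑ w, x w := by
    rw [hz]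
    simp only [Pi.sub_apply, Finset.sum_sub_distrib]
    have h3 : ∑ w, ((Qd * Q) *ᵥ x) w = 0 := by
      simp only [mulVec, dotProduct]
      rw [Finset.sum_comm]
      apply Finset.sum_eq_zero
      intro v _
      rw [← Finset.sum_mul, hcol, zero_mul]
    rw [h3, sub_zero]
  have hcard : 0 < Fintype.card V := Fintype.card_pos_iff.mpr hconn.nonempty
  have hc0 : (Fintype.card V : ℝ) ≠ 0 := Nat.cast_ne_zero.mpr hcard.ne'
  have hzu : ∀ a, z a = (∑ w, x w) / (Fintype.card V : ℝ) := by
    intro a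
    have h2 : (∑ w, x w) = (Fintype.card V : ℝ) * z a := by
      rw [← hsumz, Finset.sum_congr rfl fun w _ => hconst w a]
      simp [Finset.sum_const, Finset.card_univ, nsmul_eq_mul]
    rw [h2, mul_div_cancel_left₀ _ hc0]
  have h4 := hzu u
  rw [hz] at h4
  simp only [Pi.sub_apply] at h4
  linarith
end Penrose


open Classical in
noncomputable def effRes [Fintype V] (Qd : Matrix V V ℝ) (i j : V) : ℝ :=
  (Pi.single i 1 - Pi.single j 1) ⬝ᵥ Qd *ᵥ (Pi.single i 1 - Pi.single j 1)

noncomputable def pot [Fintype V] (Qd : Matrix V V ℝ) (a b : V) : V → ℝ :=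
  fun u => Qd u a - Qd u b

section Penrose2
variable [Fintype V] [DecidableEq V] (G : SimpleGraph V) [DecidableRel G.Adj]
  {c : V → V → ℝ}
variable (hsymm : ∀ i j, c i j = c j i) (hpos : ∀ i j, G.Adj i j → 0 < c i j)
  (hconn : G.Connected) {Qd : Matrix V V ℝ} (hQd : IsMoorePenroseInv (lapMatrix G c) Qd)

lemma dot_single_sub (a b : V) (w : V → ℝ) :
    (Pi.single a 1 - Pi.single b 1) ⬝ᵥ w = w a - w b := by
  simp only [dotProduct, Pi.sub_apply, Pi.single_apply, sub_mul, ite_mul, one_mul, zero_mul,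
    Finset.sum_sub_distrib, Finset.sum_ite_eq', Finset.mem_univ, if_true]

lemma sum_single_sub (a b : V) : ∑ w, (Pi.single a 1 - Pi.single b 1 : V → ℝ) w = 0 := by
  simp [Pi.single_apply, Finset.sum_sub_distrib]

lemma mulVec_single_sub (M : Matrix V V ℝ) (a b : V) :
    M *ᵥ (Pi.single a 1 - Pi.single b 1) = fun u => M u a - M u b := by
  rw [mulVec_sub]
  funext u
  simp [mulVec_single]

lemma pot_eq (a b : V) : Qd *ᵥ (Pi.single a 1 - Pi.single b 1) = pot Qd a b :=
  mulVec_single_sub Qd a b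

include hsymm hpos hconn hQd in
lemma QdQ_entry (u w : V) :
    (Qd * lapMatrix G c) u w = (if u = w then 1 else 0) - (Fintype.card V : ℝ)⁻¹ := by
  have h := QdQ_mulVec G hsymm hpos hconn hQd (Pi.single w 1) u
  rw [mulVec_single_one] at h
  simp only [Pi.single_apply, mul_one, Matrix.col_apply] at h
  rw [h]
  simp [div_eq_mul_inv]

lemma transpose_penrose {Q Qd : Matrix V V ℝ} (hQ : Qᵀ = Q)
    (h : IsMoorePenroseInv Q Qd) : IsMoorePenroseInv Q Qdᵀ := by
  obtain ⟨h1, h2, h3, h4⟩ := h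
  have key : Q * Qdᵀ = Qd * Q := by
    calc Q * Qdᵀ = Qᵀ * Qdᵀ := by rw [hQ]
      _ = (Qd * Q)ᵀ := by rw [Matrix.transpose_mul]
      _ = Qd * Q := h4
  have key2 : Qdᵀ * Q = Q * Qd := by
    calc Qdᵀ * Q = Qdᵀ * Qᵀ := by rw [hQ]
      _ = (Q * Qd)ᵀ := by rw [Matrix.transpose_mul]
      _ = Q * Qd := h3
  refine ⟨?_, ?_, ?_, ?_⟩
  · have := congrArg Matrix.transpose h1
    rwa [Matrix.transpose_mul, Matrix.transpose_mul, hQ, ← Matrix.mul_assoc] at this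
  · have := congrArg Matrix.transpose h2
    rwa [Matrix.transpose_mul, Matrix.transpose_mul, hQ, ← Matrix.mul_assoc] at this
  · rw [key, h4]
  · rw [key2, h3]

include hsymm in
lemma lap_transpose : (lapMatrix G c)ᵀ = lapMatrix G c := by
  ext u w
  exact lap_symm G hsymm w u

include hsymm hpos hconn hQd in
lemma QQd_entry (u w : V) :
    (lapMatrix G c * Qd) u w = (if u = w then 1 else 0) - (Fintype.card V : ℝ)⁻¹ := by
  have key : lapMatrix G c * Qd = Qdᵀ * lapMatrix G c := by
    calc lapMatrix G c * Qd = (lapMatrix G c * Qd)ᵀ := hQd.2.2.1.symm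
      _ = Qdᵀ * (lapMatrix G c)ᵀ := Matrix.transpose_mul _ _
      _ = Qdᵀ * lapMatrix G c := by rw [lap_transpose G hsymm]
  rw [key]
  exact QdQ_entry G hsymm hpos hconn (transpose_penrose (lap_transpose G hsymm) hQd) u w

include hsymm hpos hconn hQd in
lemma QQd_mulVec (y : V → ℝ) (u : V) :
    ((lapMatrix G c * Qd) *ᵥ y) u = y u - (∑ w, y w) / (Fintype.card V : ℝ) := by
  simp only [mulVec, dotProduct, QQd_entry G hsymm hpos hconn hQd, sub_mul, ite_mul, one_mul,
    zero_mul, Finset.sum_sub_distrib, Finset.sum_ite_eq, Finset.mem_univ, if_true]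
  rw [div_eq_mul_inv, ← Finset.mul_sum]
  ring

include hsymm hpos hconn hQd in
lemma Qd_symm (u v : V) : Qd u v = Qd v u := by
  have hrow : lapMatrix G c *ᵥ (fun w => Qd u w - Qd w u) = 0 := by
    funext a
    simp only [mulVec, dotProduct, Pi.zero_apply, mul_sub, Finset.sum_sub_distrib]
    have e1 : ∑ b, lapMatrix G c a b * Qd u b = (Qd * lapMatrix G c) u a := by
      rw [Matrix.mul_apply]
      exact Finset.sum_congr rfl fun b _ => by rw [lap_symm G hsymm a b]; ring
    have e2 : ∑ b, lapMatrix G c a b * Qd b u = (lapMatrix G c * Qd) a u := by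
      rw [Matrix.mul_apply]
    rw [e1, e2, QdQ_entry G hsymm hpos hconn hQd, QQd_entry G hsymm hpos hconn hQd]
    by_cases h : u = a
    · subst h; simp
    · rw [if_neg h, if_neg (Ne.symm h)]; ring
  have hconst := lap_ker G hsymm hpos hconn hrow
  have h5 := hconst v u
  simp only [sub_self] at h5
  linarith [h5]

include hsymm hpos hconn hQd in
lemma Qd_transpose : Qdᵀ = Qd := by
  ext u v
  exact Qd_symm G hsymm hpos hconn hQd v u

include hsymm hpos hconn hQd in
lemma Qd_psd (x : V → ℝ) : 0 ≤ x ⬝ᵥ Qd *ᵥ x := by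
  have hu : Qd *ᵥ x = x ᵥ* Qd := by
    conv_lhs => rw [← Qd_transpose G hsymm hpos hconn hQd]
    exact Matrix.mulVec_transpose Qd x
  have h1 : x ⬝ᵥ Qd *ᵥ x = (Qd *ᵥ x) ⬝ᵥ lapMatrix G c *ᵥ (Qd *ᵥ x) := by
    calc x ⬝ᵥ Qd *ᵥ x = x ⬝ᵥ (Qd * lapMatrix G c * Qd) *ᵥ x := by rw [hQd.2.1]
      _ = x ⬝ᵥ Qd *ᵥ (lapMatrix G c *ᵥ (Qd *ᵥ x)) := by
          rw [mulVec_mulVec, mulVec_mulVec, Matrix.mul_assoc]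
      _ = (x ᵥ* Qd) ⬝ᵥ (lapMatrix G c *ᵥ (Qd *ᵥ x)) := dotProduct_mulVec _ _ _
      _ = (Qd *ᵥ x) ⬝ᵥ lapMatrix G c *ᵥ (Qd *ᵥ x) := by rw [← hu]
  rw [h1]
  exact quad_nonneg G hsymm hpos _

lemma effRes_entries (Qd' : Matrix V V ℝ) (a b : V) :
    effRes Qd' a b = Qd' a a + Qd' b b - Qd' a b - Qd' b a := by
  simp only [effRes, mulVec_sub, mulVec_single_one, Matrix.col_apply, mul_one, sub_dotProduct, dotProduct,
    Pi.sub_apply, Pi.single_apply, ite_mul, one_mul, zero_mul, Finset.sum_sub_distrib,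
    Finset.sum_ite_eq', Finset.mem_univ, if_true]
  simp only [sub_mul, ite_mul, one_mul, zero_mul, Finset.sum_sub_distrib,
    Finset.sum_ite_eq', Finset.mem_univ, if_true]
  ring

include hsymm hpos hconn hQd in
lemma effRes_eq (a b : V) : effRes Qd a b = Qd a a + Qd b b - 2 * Qd a b := by
  rw [effRes_entries, Qd_symm G hsymm hpos hconn hQd b a]
  ring

lemma effRes_self (a : V) : effRes Qd a a = 0 := by
  rw [effRes_entries]; ring

include hsymm hpos hconn hQd in
lemma effRes_symm (a b : V) : effRes Qd a b = effRes Qd b a := by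
  rw [effRes_eq G hsymm hpos hconn hQd, effRes_eq G hsymm hpos hconn hQd,
    Qd_symm G hsymm hpos hconn hQd a b]
  ring

include hsymm hpos hconn hQd in
lemma effRes_nonneg (a b : V) : 0 ≤ effRes Qd a b :=
  Qd_psd G hsymm hpos hconn hQd _

include hsymm hpos hconn hQd in
lemma effRes_pot (a b : V) : effRes Qd a b = pot Qd a b a - pot Qd a b b := by
  rw [effRes_entries]; simp only [pot]; ring

include hsymm hpos hconn hQd in
lemma lap_pot (a b : V) :
    lapMatrix G c *ᵥ pot Qd a b = Pi.single a 1 - Pi.single b 1 := by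
  funext u
  rw [← pot_eq, mulVec_mulVec, QQd_mulVec G hsymm hpos hconn hQd, sum_single_sub, zero_div,
    sub_zero]

include hsymm hpos hconn hQd in
lemma pot_swap (a b x y : V) :
    pot Qd a b x - pot Qd a b y = pot Qd x y a - pot Qd x y b := by
  simp only [pot]
  rw [Qd_symm G hsymm hpos hconn hQd x a, Qd_symm G hsymm hpos hconn hQd x b,
    Qd_symm G hsymm hpos hconn hQd y a, Qd_symm G hsymm hpos hconn hQd y b]
  ring

include hsymm hpos hconn in
lemma max_principle_upper {a b : V} (hab : a ≠ b) {v : V → ℝ}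
    (hv : lapMatrix G c *ᵥ v = Pi.single a 1 - Pi.single b 1) (z : V) : v z ≤ v a := by
  obtain ⟨m, _, hm⟩ := Finset.exists_max_image (Finset.univ : Finset V) v ⟨a, Finset.mem_univ a⟩
  have hmax : ∀ w, v w ≤ v m := fun w => hm w (Finset.mem_univ w)
  have hprop : ∀ (s x : V) (p : G.Walk s x), v s = v m → (v x = v m ∨ v a = v m) := by
    intro s x p
    induction p with
    | nil => exact fun h => Or.inl h
    | @cons s t y hadj p ih =>
      intro hs
      by_cases hsa : s = a
      · exact Or.inr (hsa ▸ hs)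
      by_cases hsb : s = b
      · exfalso
        have h1 : (lapMatrix G c *ᵥ v) s = -1 := by
          rw [hv]
          simp [Pi.single_apply, hsa, hsb, Ne.symm hab]
        rw [lap_mulVec] at h1
        have h2 : (0:ℝ) ≤ ∑ x, cc G c s x * (v s - v x) :=
          Finset.sum_nonneg fun x _ => mul_nonneg (cc_nonneg G hpos s x)
            (by rw [hs]; linarith [hmax x])
        linarith
      · have h1 : (lapMatrix G c *ᵥ v) s = 0 := by
          rw [hv]
          simp [Pi.single_apply, hsa, hsb]
        rw [lap_mulVec] at h1
        have hterm : ∀ x ∈ Finset.univ, (0:ℝ) ≤ cc G c s x * (v s - v x) :=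
          fun x _ => mul_nonneg (cc_nonneg G hpos s x) (by rw [hs]; linarith [hmax x])
        have hzero := (Finset.sum_eq_zero_iff_of_nonneg hterm).mp h1 t (Finset.mem_univ t)
        have hcw : 0 < cc G c s t := by
          unfold cc; rw [if_pos hadj]; exact hpos _ _ hadj
        have hut : v s - v t = 0 := by
          rcases mul_eq_zero.mp hzero with h' | h'
          · exact absurd h' hcw.ne'
          · exact h'
        exact ih (by rw [← hs]; linarith)
  rcases hconn.preconnected m a with ⟨p⟩
  have hma : v a = v m := by
    rcases hprop m a p rfl with h | h <;> exact h
  rw [hma]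
  exact hmax z

include hsymm hpos hconn in
lemma min_principle {a b : V} (hab : a ≠ b) {v : V → ℝ}
    (hv : lapMatrix G c *ᵥ v = Pi.single a 1 - Pi.single b 1) (z : V) : v b ≤ v z := by
  have hv' : lapMatrix G c *ᵥ (-v) = Pi.single b 1 - Pi.single a 1 := by
    rw [mulVec_neg, hv]; ring_nf
  have := max_principle_upper G hsymm hpos hconn (Ne.symm hab) hv' z
  simpa using this

include hsymm hpos hconn hQd in
lemma effRes_triangle (a b e : V) : effRes Qd a b ≤ effRes Qd a e + effRes Qd e b := by
  by_cases hab : a = b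
  · subst hab
    rw [effRes_self]
    exact add_nonneg (effRes_nonneg G hsymm hpos hconn hQd _ _)
      (effRes_nonneg G hsymm hpos hconn hQd _ _)
  by_cases hae : a = e
  · subst hae; rw [effRes_self]; linarith
  by_cases heb : e = b
  · subst heb; rw [effRes_self]; linarith
  have h1 : pot Qd a b a - pot Qd a b e ≤ effRes Qd a e := by
    rw [pot_swap G hsymm hpos hconn hQd, effRes_pot G hsymm hpos hconn hQd]
    have hmin := min_principle G hsymm hpos hconn hae
      (lap_pot G hsymm hpos hconn hQd a e) b
    linarith
  have h2 : pot Qd a b e - pot Qd a b b ≤ effRes Qd e b := by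
    rw [pot_swap G hsymm hpos hconn hQd, effRes_pot G hsymm hpos hconn hQd]
    have hmax := max_principle_upper G hsymm hpos hconn heb
      (lap_pot G hsymm hpos hconn hQd e b) a
    linarith
  have h3 := effRes_pot G hsymm hpos hconn hQd a b
  linarith

include hsymm hpos hconn hQd in
lemma effRes_pos {a b : V} (hab : a ≠ b) : 0 < effRes Qd a b := by
  rcases lt_or_eq_of_le (effRes_nonneg G hsymm hpos hconn hQd a b) with h | h
  · exact h
  exfalso
  -- effRes = u ⬝ Q u with u = pot a b
  set u := pot Qd a b with hudef
  have hQu : lapMatrix G c *ᵥ u = Pi.single a 1 - Pi.single b 1 :=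
    lap_pot G hsymm hpos hconn hQd a b
  have henergy : u ⬝ᵥ lapMatrix G c *ᵥ u = effRes Qd a b := by
    rw [hQu, dotProduct_comm, dot_single_sub, ← effRes_pot G hsymm hpos hconn hQd]
  have hadjeq : ∀ x y, G.Adj x y → u x = u y := by
    apply quad_zero_adj G hsymm hpos
    rw [henergy, ← h]
  have hconst : ∀ x y, u x = u y := by
    intro x y
    rcases hconn.preconnected x y with ⟨p⟩
    induction p with
    | nil => rfl
    | cons ha p ih => exact (hadjeq _ _ ha).trans ih
  have h1 : (lapMatrix G c *ᵥ u) a = 1 := by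
    rw [hQu]; simp [Pi.single_apply, hab]
  rw [lap_mulVec] at h1
  have : ∑ x, cc G c a x * (u a - u x) = 0 :=
    Finset.sum_eq_zero fun x _ => by rw [hconst a x]; ring
  linarith

end Penrose2


open Classical in
noncomputable def nodeCurv [Fintype V] (G : SimpleGraph V) (c : V → V → ℝ)
    (Qd : Matrix V V ℝ) (i : V) : ℝ :=
  1 - 1 / 2 * ∑ j, if G.Adj i j then c i j * effRes Qd i j else 0

noncomputable def linkCurv [Fintype V] (G : SimpleGraph V) (c : V → V → ℝ)
    (Qd : Matrix V V ℝ) (i j : V) : ℝ :=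
  2 * (nodeCurv G c Qd i + nodeCurv G c Qd j) / effRes Qd i j

def IsCutLink (G : SimpleGraph V) (i j : V) : Prop :=
  G.Adj i j ∧
    Nat.card G.ConnectedComponent <
      Nat.card (G.deleteEdges {s(i, j)}).ConnectedComponent

noncomputable def resMatrix [Fintype V] (Qd : Matrix V V ℝ) : Matrix V V ℝ :=
  Matrix.of fun i j => effRes Qd i j

noncomputable def wasserstein1 [Fintype V] (Ω : Matrix V V ℝ) (μ ν : V → ℝ) : ℝ :=
  sInf {w : ℝ | ∃ P : Matrix V V ℝ, (∀ x y, 0 ≤ P x y) ∧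
    (∀ x, ∑ y, P x y = μ x) ∧ (∀ y, ∑ x, P x y = ν y) ∧
    w = ∑ x, ∑ y, P x y * Ω x y}

section PartA
variable [Fintype V] [DecidableEq V] (G : SimpleGraph V) [DecidableRel G.Adj]
  {c : V → V → ℝ}
variable (hsymm : ∀ i j, c i j = c j i) (hpos : ∀ i j, G.Adj i j → 0 < c i j)
  (hconn : G.Connected) {Qd : Matrix V V ℝ} (hQd : IsMoorePenroseInv (lapMatrix G c) Qd)

lemma resMatrix_apply (a b : V) : resMatrix Qd a b = effRes Qd a b := rfl

lemma nodeCurv_sum (i : V) :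
    ∑ k, cc G c i k * effRes Qd i k = 2 * (1 - nodeCurv G c Qd i) := by
  have h : ∑ k, (if G.Adj i k then c i k * effRes Qd i k else 0)
      = ∑ k, cc G c i k * effRes Qd i k :=
    Finset.sum_congr rfl fun k _ => by by_cases hA : G.Adj i k <;> simp [cc, hA]
  rw [nodeCurv, ← h]
  ring

include hsymm in
lemma row_sum_lap (a : V) : ∑ x, lapMatrix G c a x = 0 := by
  rw [← col_sum_lap G hsymm a]
  exact Finset.sum_congr rfl fun x _ => lap_symm G hsymm a x

lemma cc_eq (i k : V) :
    cc G c i k = (if i = k then deg G c i else 0) - lapMatrix G c i k := by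
  rw [lap_apply]; ring

include hsymm hpos hconn hQd in
lemma sum_cc_Qd (i : V) :
    ∑ k, cc G c i k * Qd i k = deg G c i * Qd i i - (1 - (Fintype.card V : ℝ)⁻¹) := by
  have h1 : ∑ k, cc G c i k * Qd i k
      = ∑ k, ((if i = k then deg G c i else 0) * Qd i k - lapMatrix G c i k * Qd i k) :=
    Finset.sum_congr rfl fun k _ => by rw [cc_eq]; ring
  rw [h1, Finset.sum_sub_distrib]
  have h2 : ∑ k, (if i = k then deg G c i else 0) * Qd i k = deg G c i * Qd i i := by
    simp [ite_mul, Finset.sum_ite_eq]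
  have h3 : ∑ k, lapMatrix G c i k * Qd i k = 1 - (Fintype.card V : ℝ)⁻¹ := by
    have e : ∑ k, lapMatrix G c i k * Qd i k = (lapMatrix G c * Qd) i i := by
      rw [Matrix.mul_apply]
      exact Finset.sum_congr rfl fun k _ => by
        rw [Qd_symm G hsymm hpos hconn hQd k i]
    rw [e, QQd_entry G hsymm hpos hconn hQd, if_pos rfl]
  rw [h2, h3]

include hsymm hpos hconn hQd in
lemma two_nodeCurv (i : V) :
    2 * nodeCurv G c Qd i = deg G c i * Qd i i - (∑ k, cc G c i k * Qd k k)
      + 2 * (Fintype.card V : ℝ)⁻¹ := by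
  have h0 := nodeCurv_sum G (c := c) (Qd := Qd) i
  have h1 : ∑ k, cc G c i k * effRes Qd i k
      = deg G c i * Qd i i + (∑ k, cc G c i k * Qd k k)
        - 2 * (deg G c i * Qd i i - (1 - (Fintype.card V : ℝ)⁻¹)) := by
    have e : ∀ k, cc G c i k * effRes Qd i k
        = cc G c i k * Qd i i + cc G c i k * Qd k k - 2 * (cc G c i k * Qd i k) := by
      intro k
      rw [effRes_eq G hsymm hpos hconn hQd]
      ring
    rw [Finset.sum_congr rfl fun k _ => e k]
    simp only [Finset.sum_sub_distrib, Finset.sum_add_distrib, ← Finset.sum_mul, ← Finset.mul_sum]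
    rw [sum_cc_Qd G hsymm hpos hconn hQd]
    rw [show (∑ k, cc G c i k) = deg G c i from rfl]
  rw [h1] at h0
  linarith

include hsymm hpos hconn hQd in
lemma sum_lap_Qd_diag (i : V) :
    ∑ x, lapMatrix G c i x * Qd x x = 2 * nodeCurv G c Qd i - 2 * (Fintype.card V : ℝ)⁻¹ := by
  have h1 : ∑ x, lapMatrix G c i x * Qd x x
      = ∑ x, ((if i = x then deg G c i else 0) * Qd x x - cc G c i x * Qd x x) :=
    Finset.sum_congr rfl fun x _ => by rw [lap_apply]; ring
  rw [h1, Finset.sum_sub_distrib]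
  have h2 : ∑ x, (if i = x then deg G c i else 0) * Qd x x = deg G c i * Qd i i := by
    simp [ite_mul, Finset.sum_ite_eq]
  rw [h2, two_nodeCurv G hsymm hpos hconn hQd]
  ring

-- the lazy random walk distribution
lemma mu_apply (t : ℝ) (a x : V) :
    (((1 : Matrix V V ℝ) - t • lapMatrix G c) *ᵥ Pi.single a 1) x
      = (if x = a then 1 else 0) - t * lapMatrix G c x a := by
  rw [sub_mulVec, one_mulVec]
  simp [Matrix.smul_mulVec, mulVec_single, Pi.single_apply]

include hsymm in
lemma mu_sum (t : ℝ) (a : V) :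
    ∑ x, (((1 : Matrix V V ℝ) - t • lapMatrix G c) *ᵥ Pi.single a 1) x = 1 := by
  simp only [mu_apply, Finset.sum_sub_distrib, Finset.sum_ite_eq', Finset.mem_univ, if_true]
  have : ∑ x, t * lapMatrix G c x a = 0 := by
    rw [← Finset.mul_sum, col_sum_lap G hsymm, mul_zero]
  rw [this, sub_zero]

include hsymm hpos in
lemma mu_nonneg (t : ℝ) (ht : 0 ≤ t) (a : V) (hdeg : t * deg G c a ≤ 1) (x : V) :
    0 ≤ (((1 : Matrix V V ℝ) - t • lapMatrix G c) *ᵥ Pi.single a 1) x := by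
  rw [mu_apply, lap_apply]
  by_cases h : x = a
  · subst h
    rw [if_pos rfl, if_pos rfl, cc_self, sub_zero]
    linarith
  · simp only [if_neg h]
    have := cc_nonneg G hpos x a
    nlinarith

include hsymm hpos hconn hQd in
lemma T1_lemma (t : ℝ) (a : V) :
    ∑ x, (((1 : Matrix V V ℝ) - t • lapMatrix G c) *ᵥ Pi.single a 1) x * Qd x x
      = Qd a a - t * (2 * nodeCurv G c Qd a - 2 * (Fintype.card V : ℝ)⁻¹) := by
  simp only [mu_apply, sub_mul, ite_mul, one_mul, zero_mul, Finset.sum_sub_distrib,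
    Finset.sum_ite_eq', Finset.mem_univ, if_true]
  have h : ∑ x, t * lapMatrix G c x a * Qd x x
      = t * (2 * nodeCurv G c Qd a - 2 * (Fintype.card V : ℝ)⁻¹) := by
    rw [← sum_lap_Qd_diag G hsymm hpos hconn hQd a, Finset.mul_sum]
    exact Finset.sum_congr rfl fun x _ => by rw [lap_symm G hsymm x a]; ring
  rw [h]

lemma dot_single (a : V) (w : V → ℝ) : Pi.single a (1:ℝ) ⬝ᵥ w = w a := by
  simp [dotProduct, Pi.single_apply, ite_mul, one_mul, zero_mul]

include hsymm hpos hconn hQd in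
lemma T3_lemma (t : ℝ) (a b : V) :
    (((1 : Matrix V V ℝ) - t • lapMatrix G c) *ᵥ Pi.single a 1) ⬝ᵥ Qd *ᵥ
      (((1 : Matrix V V ℝ) - t • lapMatrix G c) *ᵥ Pi.single b 1)
    = Qd a b - 2 * t * ((if a = b then 1 else 0) - (Fintype.card V : ℝ)⁻¹)
      + t ^ 2 * lapMatrix G c a b := by
  have hμ : ((1 : Matrix V V ℝ) - t • lapMatrix G c) *ᵥ Pi.single a 1
      = Pi.single a 1 - t • (lapMatrix G c *ᵥ Pi.single a 1) := by
    rw [sub_mulVec, one_mulVec, Matrix.smul_mulVec]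
  have hν : ((1 : Matrix V V ℝ) - t • lapMatrix G c) *ᵥ Pi.single b 1
      = Pi.single b 1 - t • (lapMatrix G c *ᵥ Pi.single b 1) := by
    rw [sub_mulVec, one_mulVec, Matrix.smul_mulVec]
  rw [hμ, hν]
  simp only [mulVec_sub, mulVec_smul, sub_dotProduct, dotProduct_sub, smul_dotProduct,
    dotProduct_smul, smul_eq_mul]
  have d1 : Pi.single a (1:ℝ) ⬝ᵥ Qd *ᵥ Pi.single b 1 = Qd a b := by
    rw [mulVec_single, dot_single]; simp
  have d2 : Pi.single a (1:ℝ) ⬝ᵥ Qd *ᵥ (lapMatrix G c *ᵥ Pi.single b 1)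
      = (if a = b then 1 else 0) - (Fintype.card V : ℝ)⁻¹ := by
    rw [mulVec_mulVec, mulVec_single_one, dot_single, Matrix.col_apply,
      QdQ_entry G hsymm hpos hconn hQd a b]
  have d3 : (lapMatrix G c *ᵥ Pi.single a 1) ⬝ᵥ (Qd *ᵥ Pi.single b 1)
      = (if a = b then 1 else 0) - (Fintype.card V : ℝ)⁻¹ := by
    simp only [mulVec_single_one, Matrix.col_apply, dotProduct, mul_one]
    have e : ∑ x, lapMatrix G c x a * Qd x b = (lapMatrix G c * Qd) a b := by
      rw [Matrix.mul_apply]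
      exact Finset.sum_congr rfl fun x _ => by rw [lap_symm G hsymm x a]
    rw [e, QQd_entry G hsymm hpos hconn hQd]
  have d4 : (lapMatrix G c *ᵥ Pi.single a 1) ⬝ᵥ Qd *ᵥ (lapMatrix G c *ᵥ Pi.single b 1)
      = lapMatrix G c a b := by
    rw [mulVec_mulVec]
    simp only [mulVec_single_one, Matrix.col_apply, dotProduct, mul_one]
    have e : ∀ x, lapMatrix G c x a * (Qd * lapMatrix G c) x b
        = lapMatrix G c a x * ((if x = b then 1 else 0) - (Fintype.card V : ℝ)⁻¹) := by
      intro x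
      rw [lap_symm G hsymm x a, QdQ_entry G hsymm hpos hconn hQd]
    rw [Finset.sum_congr rfl fun x _ => e x]
    simp only [mul_sub, mul_ite, mul_one, mul_zero, Finset.sum_sub_distrib,
      Finset.sum_ite_eq', Finset.mem_univ, if_true]
    rw [← Finset.sum_mul, row_sum_lap G hsymm, zero_mul, sub_zero]
  rw [d1, d2, d3, d4]
  ring

include hsymm hpos hconn hQd in
lemma cost_eq {i j : V} (hij : G.Adj i j) (t : ℝ) :
    (∑ x, ∑ y, ((((1 : Matrix V V ℝ) - t • lapMatrix G c) *ᵥ Pi.single i 1) x *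
        (((1 : Matrix V V ℝ) - t • lapMatrix G c) *ᵥ Pi.single j 1) y) * resMatrix Qd x y)
      = effRes Qd i j - 2 * t * (nodeCurv G c Qd i + nodeCurv G c Qd j) + 2 * t ^ 2 * c i j := by
  set μ := ((1 : Matrix V V ℝ) - t • lapMatrix G c) *ᵥ Pi.single i 1 with hμdef
  set ν := ((1 : Matrix V V ℝ) - t • lapMatrix G c) *ᵥ Pi.single j 1 with hνdef
  have hij' : i ≠ j := G.ne_of_adj hij
  have e1 : ∀ x, ∑ y, (μ x * ν y) * resMatrix Qd x y
      = μ x * Qd x x + μ x * (∑ y, ν y * Qd y y) - 2 * (μ x * ∑ y, Qd x y * ν y) := by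
    intro x
    have e0 : ∀ y, (μ x * ν y) * resMatrix Qd x y
        = μ x * Qd x x * ν y + μ x * (ν y * Qd y y) - 2 * (μ x * (Qd x y * ν y)) := by
      intro y
      rw [resMatrix_apply, effRes_eq G hsymm hpos hconn hQd]
      ring
    rw [Finset.sum_congr rfl fun y _ => e0 y]
    simp only [Finset.sum_sub_distrib, Finset.sum_add_distrib, ← Finset.mul_sum]
    have hν1 : ∑ y, ν y = 1 := by rw [hνdef]; exact mu_sum G hsymm t j
    rw [hν1, mul_one]
  rw [Finset.sum_congr rfl fun x _ => e1 x]
  simp only [Finset.sum_sub_distrib, Finset.sum_add_distrib]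
  have e2 : ∑ x, μ x * (∑ y, ν y * Qd y y) = ∑ y, ν y * Qd y y := by
    have hμ1 : ∑ x, μ x = 1 := by rw [hμdef]; exact mu_sum G hsymm t i
    rw [← Finset.sum_mul, hμ1, one_mul]
  have e3 : ∑ x, 2 * (μ x * ∑ y, Qd x y * ν y) = 2 * (μ ⬝ᵥ Qd *ᵥ ν) := by
    simp only [dotProduct, mulVec, ← Finset.mul_sum]
  have e4 := T1_lemma G hsymm hpos hconn hQd t i
  have e5 := T1_lemma G hsymm hpos hconn hQd t j
  have e6 := T3_lemma G hsymm hpos hconn hQd t i j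
  rw [e2, e3]
  rw [← hμdef] at e4
  rw [← hνdef] at e5
  rw [← hμdef, ← hνdef] at e6
  rw [e4, e5, e6, if_neg hij', effRes_eq G hsymm hpos hconn hQd, lap_apply, if_neg hij']
  rw [show cc G c i j = c i j from by unfold cc; rw [if_pos hij]]
  ring

include hsymm hpos hconn hQd in
lemma prodCoupling_mem {i j : V} (hij : G.Adj i j) (t : ℝ) (ht : 0 ≤ t)
    (hdeg : ∀ v : V, t * deg G c v ≤ 1) :
    (effRes Qd i j - 2 * t * (nodeCurv G c Qd i + nodeCurv G c Qd j) + 2 * t ^ 2 * c i j)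
      ∈ {w : ℝ | ∃ P : Matrix V V ℝ, (∀ x y, 0 ≤ P x y) ∧
        (∀ x, ∑ y, P x y = (((1 : Matrix V V ℝ) - t • lapMatrix G c) *ᵥ Pi.single i 1) x) ∧
        (∀ y, ∑ x, P x y = (((1 : Matrix V V ℝ) - t • lapMatrix G c) *ᵥ Pi.single j 1) y) ∧
        w = ∑ x, ∑ y, P x y * resMatrix Qd x y} := by
  set μ := ((1 : Matrix V V ℝ) - t • lapMatrix G c) *ᵥ Pi.single i 1 with hμdef
  set ν := ((1 : Matrix V V ℝ) - t • lapMatrix G c) *ᵥ Pi.single j 1 with hνdef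
  refine ⟨Matrix.of fun x y => μ x * ν y, ?_, ?_, ?_, ?_⟩
  · intro x y
    exact mul_nonneg (mu_nonneg G hsymm hpos t ht i (hdeg i) x)
      (mu_nonneg G hsymm hpos t ht j (hdeg j) y)
  · intro x
    simp only [Matrix.of_apply]
    have hν1 : ∑ y, ν y = 1 := by rw [hνdef]; exact mu_sum G hsymm t j
    rw [← Finset.mul_sum, hν1, mul_one]
  · intro y
    simp only [Matrix.of_apply]
    have hμ1 : ∑ x, μ x = 1 := by rw [hμdef]; exact mu_sum G hsymm t i
    rw [← Finset.sum_mul, hμ1, one_mul]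
  · exact (cost_eq G hsymm hpos hconn hQd hij t).symm

include hsymm hpos hconn hQd in
lemma wass_bddBelow (μ ν : V → ℝ) :
    BddBelow {w : ℝ | ∃ P : Matrix V V ℝ, (∀ x y, 0 ≤ P x y) ∧
      (∀ x, ∑ y, P x y = μ x) ∧ (∀ y, ∑ x, P x y = ν y) ∧
      w = ∑ x, ∑ y, P x y * resMatrix Qd x y} := by
  refine ⟨0, fun w hw => ?_⟩
  obtain ⟨P, hP, _, _, hwe⟩ := hw
  rw [hwe]
  exact Finset.sum_nonneg fun x _ => Finset.sum_nonneg fun y _ =>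
    mul_nonneg (hP x y) (by rw [resMatrix_apply]; exact effRes_nonneg G hsymm hpos hconn hQd x y)

include hsymm hpos hconn hQd in
lemma partA {i j : V} (hij : G.Adj i j) (t : ℝ) (ht : 0 ≤ t)
    (hdeg : ∀ v : V, t * deg G c v ≤ 1) :
    wasserstein1 (resMatrix Qd) (((1 : Matrix V V ℝ) - t • lapMatrix G c) *ᵥ Pi.single i 1)
      (((1 : Matrix V V ℝ) - t • lapMatrix G c) *ᵥ Pi.single j 1)
      ≤ effRes Qd i j - 2 * t * (nodeCurv G c Qd i + nodeCurv G c Qd j) + 2 * t ^ 2 * c i j :=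
  csInf_le (wass_bddBelow G hsymm hpos hconn hQd _ _)
    (prodCoupling_mem G hsymm hpos hconn hQd hij t ht hdeg)

end PartA


section Cut
variable [Fintype V] [DecidableEq V] (G : SimpleGraph V) [DecidableRel G.Adj]
  {c : V → V → ℝ}
variable (hsymm : ∀ i j, c i j = c j i) (hpos : ∀ i j, G.Adj i j → 0 < c i j)
  (hconn : G.Connected) {Qd : Matrix V V ℝ} (hQd : IsMoorePenroseInv (lapMatrix G c) Qd)

lemma cut_not_reachable {i j : V} (hcut : IsCutLink G i j) :
    ¬ (G.deleteEdges {s(i,j)}).Reachable i j := by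
  intro hr
  have hmono : ∀ u w, (G.deleteEdges {s(i,j)}).Reachable u w → G.Reachable u w :=
    fun u w h => h.mono (SimpleGraph.deleteEdges_le _)
  have hconv : ∀ u w, G.Reachable u w → (G.deleteEdges {s(i,j)}).Reachable u w := by
    intro u w h
    rcases h with ⟨p⟩
    induction p with
    | nil => exact SimpleGraph.Reachable.refl _
    | @cons a b w hadj p ih =>
      refine SimpleGraph.Reachable.trans ?_ ih
      by_cases he : s(a, b) = s(i, j)
      · rcases (Sym2.eq_iff.mp he) with ⟨rfl, rfl⟩ | ⟨rfl, rfl⟩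
        · exact hr
        · exact hr.symm
      · exact SimpleGraph.Adj.reachable
          (SimpleGraph.deleteEdges_adj.mpr ⟨hadj, by simpa using he⟩)
  have e : G.ConnectedComponent ≃ (G.deleteEdges {s(i,j)}).ConnectedComponent :=
    Quot.congrRight (fun u w => ⟨hconv u w, hmono u w⟩)
  have hcard := Nat.card_congr e
  exact absurd hcut.2 (by rw [hcard]; exact lt_irrefl _)

include hconn in
lemma reach_i_or_j {i j : V} (x : V) :
    (G.deleteEdges {s(i,j)}).Reachable i x ∨ (G.deleteEdges {s(i,j)}).Reachable j x := by
  have key : ∀ (s y : V) (p : G.Walk s y),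
      ((G.deleteEdges {s(i,j)}).Reachable i s ∨ (G.deleteEdges {s(i,j)}).Reachable j s) →
      ((G.deleteEdges {s(i,j)}).Reachable i y ∨ (G.deleteEdges {s(i,j)}).Reachable j y) := by
    intro s y p
    induction p with
    | nil => exact id
    | @cons a b y hadj p ih =>
      intro hs
      apply ih
      by_cases he : s(a, b) = s(i, j)
      · rcases (Sym2.eq_iff.mp he) with ⟨rfl, rfl⟩ | ⟨rfl, rfl⟩
        · exact Or.inr (SimpleGraph.Reachable.refl _)
        · exact Or.inl (SimpleGraph.Reachable.refl _)
      · have hadj' : (G.deleteEdges {s(i,j)}).Adj a b :=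
          SimpleGraph.deleteEdges_adj.mpr ⟨hadj, by simpa using he⟩
        rcases hs with h | h
        · exact Or.inl (h.trans hadj'.reachable)
        · exact Or.inr (h.trans hadj'.reachable)
  rcases hconn.preconnected i x with ⟨p⟩
  exact key i x p (Or.inl (SimpleGraph.Reachable.refl _))

lemma crossing_S {i j : V} (hcut : IsCutLink G i j) :
    ∀ u w, (G.deleteEdges {s(i,j)}).Reachable i u →
      ¬ (G.deleteEdges {s(i,j)}).Reachable i w → G.Adj u w → u = i ∧ w = j := by
  intro u w hu hw hA
  by_cases he : s(u, w) = s(i, j)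
  · rcases (Sym2.eq_iff.mp he) with ⟨rfl, rfl⟩ | ⟨rfl, rfl⟩
    · exact ⟨rfl, rfl⟩
    · exact absurd hu (fun h => cut_not_reachable G hcut h)
  · exfalso
    apply hw
    exact hu.trans (SimpleGraph.Adj.reachable
      (SimpleGraph.deleteEdges_adj.mpr ⟨hA, by simpa using he⟩))

include hsymm in
lemma cutFlow (T : Set V) [DecidablePred (· ∈ T)] {p q : V} (hp : p ∈ T) (hq : q ∉ T)
    (hcross : ∀ u w, u ∈ T → w ∉ T → G.Adj u w → u = p ∧ w = q) (v : V → ℝ) :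
    ∑ u ∈ Finset.univ.filter (· ∈ T), (lapMatrix G c *ᵥ v) u
      = cc G c p q * (v p - v q) := by
  have hsplit : ∀ u, (lapMatrix G c *ᵥ v) u
      = (∑ w ∈ Finset.univ.filter (· ∈ T), cc G c u w * (v u - v w))
        + ∑ w ∈ Finset.univ.filter (¬ · ∈ T), cc G c u w * (v u - v w) := by
    intro u
    rw [lap_mulVec, ← Finset.sum_filter_add_sum_filter_not Finset.univ (· ∈ T)]
  rw [Finset.sum_congr rfl fun u _ => hsplit u, Finset.sum_add_distrib]
  have hA : ∑ u ∈ Finset.univ.filter (· ∈ T), ∑ w ∈ Finset.univ.filter (· ∈ T),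
      cc G c u w * (v u - v w) = 0 := by
    set A := ∑ u ∈ Finset.univ.filter (· ∈ T), ∑ w ∈ Finset.univ.filter (· ∈ T),
      cc G c u w * (v u - v w) with hAdef
    have h2 : A + A = 0 := by
      nth_rewrite 2 [hAdef]
      rw [Finset.sum_comm]
      rw [hAdef, ← Finset.sum_add_distrib]
      apply Finset.sum_eq_zero
      intro u _
      rw [← Finset.sum_add_distrib]
      apply Finset.sum_eq_zero
      intro w _
      rw [cc_symm G hsymm w u]
      ring
    linarith
  rw [hA, zero_add]
  have hzero_outer : ∀ u ∈ Finset.univ.filter (· ∈ T), u ≠ p →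
      (∑ w ∈ Finset.univ.filter (¬ · ∈ T), cc G c u w * (v u - v w)) = 0 := by
    intro u hu hup
    simp only [Finset.mem_filter, Finset.mem_univ, true_and] at hu
    apply Finset.sum_eq_zero
    intro w hw
    simp only [Finset.mem_filter, Finset.mem_univ, true_and] at hw
    have hc0 : cc G c u w = 0 := by
      unfold cc; rw [if_neg]; intro hA'; exact hup (hcross u w hu hw hA').1
    rw [hc0, zero_mul]
  have hzero_inner : ∀ w ∈ Finset.univ.filter (¬ · ∈ T), w ≠ q →
      cc G c p w * (v p - v w) = 0 := by
    intro w hw hwq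
    simp only [Finset.mem_filter, Finset.mem_univ, true_and] at hw
    have hc0 : cc G c p w = 0 := by
      unfold cc; rw [if_neg]; intro hA'; exact hwq (hcross p w hp hw hA').2
    rw [hc0, zero_mul]
  rw [Finset.sum_eq_single_of_mem p (by simpa using hp) hzero_outer,
    Finset.sum_eq_single_of_mem q (by simpa using hq) hzero_inner]

include hsymm hpos hconn in
lemma harmonic_const (T : Set V) [DecidablePred (· ∈ T)] {p q : V} (hp : p ∈ T) (hq : q ∉ T)
    (hcross : ∀ u w, u ∈ T → w ∉ T → G.Adj u w → u = p ∧ w = q)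
    (hcpos : 0 < cc G c p q)
    {a b : V} (ha : a ∈ T) (hb : b ∈ T) {v : V → ℝ}
    (hv : lapMatrix G c *ᵥ v = Pi.single a 1 - Pi.single b 1) :
    v p = v q ∧ ∀ y, y ∉ T → v y = v q := by
  have hflow := cutFlow G hsymm T hp hq hcross v
  rw [hv] at hflow
  have hsum0 : ∑ u ∈ Finset.univ.filter (· ∈ T), (Pi.single a 1 - Pi.single b 1 : V → ℝ) u
      = 0 := by
    simp only [Pi.sub_apply, Pi.single_apply, Finset.sum_sub_distrib,
      Finset.sum_ite_eq', Finset.mem_filter, Finset.mem_univ, true_and]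
    rw [if_pos ha, if_pos hb, sub_self]
  rw [hsum0] at hflow
  have hpq : v p = v q := by
    rcases mul_eq_zero.mp hflow.symm with h | h
    · exact absurd h hcpos.ne'
    · linarith
  set u' : V → ℝ := fun w => if w ∈ T then v q else v w with hu'def
  have hker : lapMatrix G c *ᵥ u' = 0 := by
    funext w
    rw [lap_mulVec]
    by_cases hw : w ∈ T
    · apply Finset.sum_eq_zero
      intro x _
      by_cases hA : G.Adj w x
      · have hx : u' x = v q := by
          by_cases hxT : x ∈ T
          · simp [hu'def, hxT]
          · have hc := hcross w x hw hxT hA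
            rw [hc.2]
            simp [hu'def, hq]
        rw [show u' w = v q from by simp [hu'def, hw], hx, sub_self, mul_zero]
      · rw [show cc G c w x = 0 from by unfold cc; exact if_neg hA, zero_mul]
    · have hwa : w ≠ a := fun h => hw (h ▸ ha)
      have hwb : w ≠ b := fun h => hw (h ▸ hb)
      have hQvw : (lapMatrix G c *ᵥ v) w = 0 := by
        rw [hv]
        simp [Pi.single_apply, hwa, hwb]
      rw [lap_mulVec] at hQvw
      rw [Pi.zero_apply, ← hQvw]
      apply Finset.sum_congr rfl
      intro x _
      by_cases hA : G.Adj w x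
      · have hux : u' x = v x := by
          by_cases hxT : x ∈ T
          · have hc := hcross x w hxT hw hA.symm
            rw [show u' x = v q from by simp [hu'def, hxT]]
            rw [hc.1, hpq]
          · simp [hu'def, hxT]
        rw [show u' w = v w from by simp [hu'def, hw], hux]
      · rw [show cc G c w x = 0 from by unfold cc; exact if_neg hA, zero_mul, zero_mul]
  have hconst := lap_ker G hsymm hpos hconn hker
  refine ⟨hpq, fun y hy => ?_⟩
  have h := hconst y q
  rw [show u' y = v y from by simp [hu'def, hy],
    show u' q = v q from by simp [hu'def, hq]] at h
  exact h

end Cut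


section Series
variable [Fintype V] [DecidableEq V] (G : SimpleGraph V) [DecidableRel G.Adj]
  {c : V → V → ℝ}
variable (hsymm : ∀ i j, c i j = c j i) (hpos : ∀ i j, G.Adj i j → 0 < c i j)
  (hconn : G.Connected) {Qd : Matrix V V ℝ} (hQd : IsMoorePenroseInv (lapMatrix G c) Qd)
  {i j : V}

include hsymm hpos hconn hQd in
lemma bridge_res (hij : G.Adj i j) (hcut : IsCutLink G i j) :
    c i j * effRes Qd i j = 1 := by
  classical
  set S : Set V := {x | (G.deleteEdges {s(i,j)}).Reachable i x} with hSdef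
  have hiS : i ∈ S := SimpleGraph.Reachable.refl _
  have hjS : j ∉ S := cut_not_reachable G hcut
  have hcross : ∀ u w, u ∈ S → w ∉ S → G.Adj u w → u = i ∧ w = j :=
    fun u w hu hw hA => crossing_S G hcut u w hu hw hA
  have hflow := cutFlow G hsymm S hiS hjS hcross (pot Qd i j)
  rw [lap_pot G hsymm hpos hconn hQd] at hflow
  have hsum1 : ∑ u ∈ Finset.univ.filter (· ∈ S), (Pi.single i 1 - Pi.single j 1 : V → ℝ) u
      = 1 := by
    simp only [Pi.sub_apply, Pi.single_apply, Finset.sum_sub_distrib,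
      Finset.sum_ite_eq', Finset.mem_filter, Finset.mem_univ, true_and]
    rw [if_pos hiS, if_neg hjS, sub_zero]
  rw [hsum1] at hflow
  rw [show cc G c i j = c i j from by unfold cc; exact if_pos hij] at hflow
  rw [← effRes_pot G hsymm hpos hconn hQd] at hflow
  exact hflow.symm

include hsymm hpos hconn hQd in
lemma series_law (hij : G.Adj i j) (hcut : IsCutLink G i j) {x y : V}
    (hx : (G.deleteEdges {s(i,j)}).Reachable i x)
    (hy : ¬ (G.deleteEdges {s(i,j)}).Reachable i y) :
    effRes Qd x y = effRes Qd x i + effRes Qd i j + effRes Qd j y := by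
  classical
  set S : Set V := {x | (G.deleteEdges {s(i,j)}).Reachable i x} with hSdef
  have hiS : i ∈ S := SimpleGraph.Reachable.refl _
  have hjS : j ∉ S := cut_not_reachable G hcut
  have hxS : x ∈ S := hx
  have hyS : y ∉ S := hy
  have hcross : ∀ u w, u ∈ S → w ∉ S → G.Adj u w → u = i ∧ w = j :=
    fun u w hu hw hA => crossing_S G hcut u w hu hw hA
  have hccij : cc G c i j = c i j := by unfold cc; exact if_pos hij
  have hcpos : 0 < cc G c i j := by rw [hccij]; exact hpos _ _ hij
  -- h1 : v i - v j = effRes i j for v = pot x y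
  have hflow := cutFlow G hsymm S hiS hjS hcross (pot Qd x y)
  rw [lap_pot G hsymm hpos hconn hQd] at hflow
  have hsum1 : ∑ u ∈ Finset.univ.filter (· ∈ S), (Pi.single x 1 - Pi.single y 1 : V → ℝ) u
      = 1 := by
    simp only [Pi.sub_apply, Pi.single_apply, Finset.sum_sub_distrib,
      Finset.sum_ite_eq', Finset.mem_filter, Finset.mem_univ, true_and]
    rw [if_pos hxS, if_neg hyS, sub_zero]
  rw [hsum1] at hflow
  have hbr := bridge_res G hsymm hpos hconn hQd hij hcut
  have h1 : pot Qd x y i - pot Qd x y j = effRes Qd i j := by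
    have h1' : cc G c i j * (pot Qd x y i - pot Qd x y j) = cc G c i j * effRes Qd i j := by
      rw [← hflow, hccij, hbr]
    exact mul_left_cancel₀ hcpos.ne' h1'
  -- h2 : v x - v i = effRes x i
  have hu := lap_pot G hsymm hpos hconn hQd x i
  have hc2 := harmonic_const G hsymm hpos hconn S hiS hjS hcross hcpos hxS hiS hu
  have h2 : pot Qd x y x - pot Qd x y i = effRes Qd x i := by
    rw [pot_swap G hsymm hpos hconn hQd x y x i, hc2.2 y hyS, ← hc2.1,
      ← effRes_pot G hsymm hpos hconn hQd]
  -- h3 : v j - v y = effRes j y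
  set T : Set V := {x | x ∉ S} with hTdef
  have hjT : j ∈ T := hjS
  have hiT : i ∉ T := fun h => h hiS
  have hyT : y ∈ T := hyS
  have hxT : x ∉ T := fun h => h hxS
  have hcross' : ∀ u w, u ∈ T → w ∉ T → G.Adj u w → u = j ∧ w = i := by
    intro u w hu hw hA
    have hwS : w ∈ S := not_not.mp hw
    have h := hcross w u hwS hu hA.symm
    exact ⟨h.2, h.1⟩
  have hcpos' : 0 < cc G c j i := by rw [cc_symm G hsymm]; exact hcpos
  have hz := lap_pot G hsymm hpos hconn hQd j y
  have hc3 := harmonic_const G hsymm hpos hconn T hjT hiT hcross' hcpos' hjT hyT hz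
  have h3 : pot Qd x y j - pot Qd x y y = effRes Qd j y := by
    rw [pot_swap G hsymm hpos hconn hQd x y j y, hc3.2 x hxT, ← hc3.1,
      ← effRes_pot G hsymm hpos hconn hQd]
  have h0 := effRes_pot G hsymm hpos hconn hQd x y
  linarith

end Series


section PartB
variable [Fintype V] [DecidableEq V] (G : SimpleGraph V) [DecidableRel G.Adj]
  {c : V → V → ℝ}
variable (hsymm : ∀ i j, c i j = c j i) (hpos : ∀ i j, G.Adj i j → 0 < c i j)
  (hconn : G.Connected) {Qd : Matrix V V ℝ} (hQd : IsMoorePenroseInv (lapMatrix G c) Qd)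
  {i j : V}

include hsymm hpos hconn hQd in
lemma partB (hij : G.Adj i j) (hcut : IsCutLink G i j) (t : ℝ) (ht : 0 ≤ t)
    (hdeg : ∀ v : V, t * deg G c v ≤ 1) :
    effRes Qd i j - 2 * t * (nodeCurv G c Qd i + nodeCurv G c Qd j)
      ≤ wasserstein1 (resMatrix Qd) (((1 : Matrix V V ℝ) - t • lapMatrix G c) *ᵥ Pi.single i 1)
        (((1 : Matrix V V ℝ) - t • lapMatrix G c) *ᵥ Pi.single j 1) := by
  classical
  set S : Set V := {x | (G.deleteEdges {s(i,j)}).Reachable i x} with hSdef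
  have hiS : i ∈ S := SimpleGraph.Reachable.refl _
  have hjS : j ∉ S := cut_not_reachable G hcut
  have hcross : ∀ u w, u ∈ S → w ∉ S → G.Adj u w → u = i ∧ w = j :=
    fun u w hu hw hA => crossing_S G hcut u w hu hw hA
  have hser : ∀ x y, x ∈ S → y ∉ S →
      effRes Qd x y = effRes Qd x i + effRes Qd i j + effRes Qd j y :=
    fun x y hx hy => series_law G hsymm hpos hconn hQd hij hcut hx hy
  set f : V → ℝ := fun x => if x ∈ S then effRes Qd x j - effRes Qd i j
    else -(effRes Qd x i) with hfdef
  have hfi : f i = 0 := by simp [hfdef, hiS]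
  have hfj : f j = -(effRes Qd i j) := by
    simp only [hfdef, if_neg hjS]
    rw [effRes_symm G hsymm hpos hconn hQd j i]
  -- Lipschitz property
  have hLip : ∀ x y, f x - f y ≤ effRes Qd x y := by
    intro x y
    by_cases hx : x ∈ S <;> by_cases hy : y ∈ S <;>
      simp only [hfdef, if_pos, if_neg, hx, hy, if_true, if_false]
    · -- x,y ∈ S
      have hxj := hser x j hx hjS
      have hyj := hser y j hy hjS
      rw [effRes_self (Qd := Qd) _] at hxj hyj
      have htri := effRes_triangle G hsymm hpos hconn hQd x i y
      have hsym := effRes_symm G hsymm hpos hconn hQd y i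
      have hsym2 := effRes_symm G hsymm hpos hconn hQd i y
      linarith
    · -- x ∈ S, y ∉ S
      have hxj := hser x j hx hjS
      have hiy := hser i y hiS hy
      rw [effRes_self (Qd := Qd) _] at hxj
      rw [effRes_self (Qd := Qd) _] at hiy
      have hxy := hser x y hx hy
      have hsym1 := effRes_symm G hsymm hpos hconn hQd y i
      linarith
    · -- x ∉ S, y ∈ S
      have hyx := hser y x hy hx
      have hsym1 := effRes_symm G hsymm hpos hconn hQd x y
      have hsym2 := effRes_symm G hsymm hpos hconn hQd x i
      have h1 := effRes_nonneg G hsymm hpos hconn hQd y i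
      have h2 := effRes_nonneg G hsymm hpos hconn hQd j x
      have h3 := effRes_nonneg G hsymm hpos hconn hQd x i
      have h4 := effRes_nonneg G hsymm hpos hconn hQd y j
      linarith
    · -- x,y ∉ S
      have htri := effRes_triangle G hsymm hpos hconn hQd i y x
      have hsym1 := effRes_symm G hsymm hpos hconn hQd y i
      have hsym2 := effRes_symm G hsymm hpos hconn hQd x i
      have hsym3 := effRes_symm G hsymm hpos hconn hQd i x
      have hsym4 := effRes_symm G hsymm hpos hconn hQd x y
      linarith
  -- value of the dual function
  have hbr := bridge_res G hsymm hpos hconn hQd hij hcut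
  have hQfi : ∑ x, lapMatrix G c i x * f x = 2 * nodeCurv G c Qd i := by
    have e0 : ∀ x, lapMatrix G c i x * f x
        = (if i = x then deg G c i else 0) * f x - cc G c i x * f x := by
      intro x; rw [lap_apply]; ring
    rw [Finset.sum_congr rfl fun x _ => e0 x, Finset.sum_sub_distrib]
    have e1 : ∑ x, (if i = x then deg G c i else 0) * f x = 0 := by
      simp [ite_mul, Finset.sum_ite_eq, hfi]
    have e2 : ∀ x, cc G c i x * f x
        = cc G c i x * (effRes Qd i x + (if x = j then -2 * effRes Qd i j else 0)) := by
      intro x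
      by_cases hA : G.Adj i x
      · congr 1
        by_cases hxj : x = j
        · subst hxj
          rw [hfj, if_pos rfl]
          ring
        · have hxS : x ∈ S := by
            by_contra hxS
            exact hxj (hcross i x hiS hxS hA).2
          rw [hfdef]
          simp only [if_pos hxS]
          rw [hser x j hxS hjS, effRes_self (Qd := Qd) _, if_neg hxj,
            effRes_symm G hsymm hpos hconn hQd x i]
          ring
      · rw [show cc G c i x = 0 from by unfold cc; exact if_neg hA, zero_mul, zero_mul]
    rw [Finset.sum_congr rfl fun x _ => e2 x]
    simp only [mul_add, Finset.sum_add_distrib, mul_ite, mul_zero, Finset.sum_ite_eq',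
      Finset.mem_univ, if_true]
    rw [nodeCurv_sum G (c := c) (Qd := Qd) i,
      show cc G c i j = c i j from by unfold cc; exact if_pos hij, e1]
    nlinarith [hbr]
  have hQfj : ∑ x, lapMatrix G c j x * f x = -2 * nodeCurv G c Qd j := by
    have e0 : ∀ x, lapMatrix G c j x * f x
        = (if j = x then deg G c j else 0) * f x - cc G c j x * f x := by
      intro x; rw [lap_apply]; ring
    rw [Finset.sum_congr rfl fun x _ => e0 x, Finset.sum_sub_distrib]
    have e1 : ∑ x, (if j = x then deg G c j else 0) * f x
        = deg G c j * -(effRes Qd i j) := by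
      simp [ite_mul, Finset.sum_ite_eq, hfj]
    have e2 : ∀ x, cc G c j x * f x
        = cc G c j x * (-(effRes Qd i j + effRes Qd j x)
            + (if x = i then effRes Qd i j + effRes Qd j i else 0)) := by
      intro x
      by_cases hA : G.Adj j x
      · congr 1
        by_cases hxi : x = i
        · subst hxi
          rw [hfi, if_pos rfl]
          ring
        · have hxS : x ∉ S := by
            intro hxS
            exact hxi (hcross x j hxS hjS hA.symm).1
          rw [hfdef]
          simp only [if_neg hxS]
          have hiy := hser i x hiS hxS
          rw [effRes_self (Qd := Qd) _] at hiy
          rw [effRes_symm G hsymm hpos hconn hQd x i, hiy, if_neg hxi]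
          ring
      · rw [show cc G c j x = 0 from by unfold cc; exact if_neg hA, zero_mul, zero_mul]
    rw [Finset.sum_congr rfl fun x _ => e2 x]
    simp only [mul_add, mul_neg, Finset.sum_add_distrib, Finset.sum_neg_distrib, mul_ite,
      mul_zero, Finset.sum_ite_eq', Finset.mem_univ, if_true]
    have e3a : ∑ x, cc G c j x * effRes Qd i j = deg G c j * effRes Qd i j := by
      rw [← Finset.sum_mul]
      rfl
    have e3b : ∑ x, cc G c j x * effRes Qd j x = 2 * (1 - nodeCurv G c Qd j) :=
      nodeCurv_sum G (c := c) (Qd := Qd) j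
    rw [e1, e3a, e3b, show cc G c j i = c i j from by
        unfold cc; rw [if_pos hij.symm]; exact (hsymm j i),
      effRes_symm G hsymm hpos hconn hQd j i]
    nlinarith [hbr]
  -- the dual value
  set μ := ((1 : Matrix V V ℝ) - t • lapMatrix G c) *ᵥ Pi.single i 1 with hμdef
  set ν := ((1 : Matrix V V ℝ) - t • lapMatrix G c) *ᵥ Pi.single j 1 with hνdef
  have hsummu : ∀ (a : V), ∑ x, f x * (((1 : Matrix V V ℝ) - t • lapMatrix G c) *ᵥ Pi.single a 1) x
      = f a - t * ∑ x, lapMatrix G c a x * f x := by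
    intro a
    have e : ∀ x, f x * (((1 : Matrix V V ℝ) - t • lapMatrix G c) *ᵥ Pi.single a 1) x
        = (if x = a then f x else 0) - t * (lapMatrix G c a x * f x) := by
      intro x
      rw [mu_apply, lap_symm G hsymm a x]
      by_cases h : x = a <;> simp [h] <;> ring
    rw [Finset.sum_congr rfl fun x _ => e x, Finset.sum_sub_distrib]
    simp only [Finset.sum_ite_eq', Finset.mem_univ, if_true, ← Finset.mul_sum]
  have hval : (∑ x, f x * μ x) - (∑ x, f x * ν x)
      = effRes Qd i j - 2 * t * (nodeCurv G c Qd i + nodeCurv G c Qd j) := by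
    rw [hμdef, hνdef, hsummu i, hsummu j, hQfi, hQfj, hfi, hfj]
    ring
  -- weak duality
  apply le_csInf
  · exact ⟨_, prodCoupling_mem G hsymm hpos hconn hQd hij t ht hdeg⟩
  rintro w ⟨P, hP, hrow, hcol, rfl⟩
  have hge : ∑ x, ∑ y, P x y * resMatrix Qd x y ≥ ∑ x, ∑ y, P x y * (f x - f y) := by
    apply Finset.sum_le_sum
    intro x _
    apply Finset.sum_le_sum
    intro y _
    exact mul_le_mul_of_nonneg_left (by rw [resMatrix_apply]; exact hLip x y) (hP x y)
  have hsplit : ∑ x, ∑ y, P x y * (f x - f y) = (∑ x, f x * μ x) - (∑ x, f x * ν x) := by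
    have e : ∀ x, ∑ y, P x y * (f x - f y) = f x * (∑ y, P x y) - ∑ y, P x y * f y := by
      intro x
      simp only [mul_sub, Finset.sum_sub_distrib, ← Finset.mul_sum]
      congr 1
      rw [Finset.mul_sum]
      exact Finset.sum_congr rfl fun y _ => by ring
    rw [Finset.sum_congr rfl fun x _ => e x, Finset.sum_sub_distrib]
    congr 1
    · exact Finset.sum_congr rfl fun x _ => by rw [hrow x]
    · rw [Finset.sum_comm]
      exact Finset.sum_congr rfl fun y _ => by
        rw [← Finset.sum_mul, hcol y]; ring
  rw [hsplit, hval] at hge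
  exact hge

end PartB


section Limits
variable [Fintype V] [DecidableEq V] (G : SimpleGraph V) [DecidableRel G.Adj]
  {c : V → V → ℝ}
variable (hsymm : ∀ i j, c i j = c j i) (hpos : ∀ i j, G.Adj i j → 0 < c i j)
  (hconn : G.Connected) {Qd : Matrix V V ℝ} (hQd : IsMoorePenroseInv (lapMatrix G c) Qd)
  {i j : V}

include hsymm hpos hconn hQd in
lemma glower (hij : G.Adj i j) (t : ℝ) (ht : 0 < t) (hdeg : ∀ v : V, t * deg G c v ≤ 1) :
    linkCurv G c Qd i j - 2 * t * c i j / effRes Qd i j ≤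
      1 / t * (1 -
        wasserstein1 (resMatrix Qd)
          (((1 : Matrix V V ℝ) - t • lapMatrix G c) *ᵥ Pi.single i 1)
          (((1 : Matrix V V ℝ) - t • lapMatrix G c) *ᵥ Pi.single j 1) /
        effRes Qd i j) := by
  have hij' : i ≠ j := G.ne_of_adj hij
  have hω : 0 < effRes Qd i j := effRes_pos G hsymm hpos hconn hQd hij'
  have hA := partA G hsymm hpos hconn hQd hij t ht.le hdeg
  set W := wasserstein1 (resMatrix Qd)
    (((1 : Matrix V V ℝ) - t • lapMatrix G c) *ᵥ Pi.single i 1)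
    (((1 : Matrix V V ℝ) - t • lapMatrix G c) *ᵥ Pi.single j 1) with hWdef
  set ω := effRes Qd i j with hωdef
  set P : ℝ := nodeCurv G c Qd i + nodeCurv G c Qd j with hPdef
  have h1 : (2 * t * P - 2 * t ^ 2 * c i j) / ω ≤ 1 - W / ω := by
    have h2 : 1 - W / ω - (2 * t * P - 2 * t ^ 2 * c i j) / ω
        = (ω - W - (2 * t * P - 2 * t ^ 2 * c i j)) / ω := by
      field_simp
    have h3 : (0:ℝ) ≤ (ω - W - (2 * t * P - 2 * t ^ 2 * c i j)) / ω :=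
      div_nonneg (by linarith) hω.le
    linarith [h2 ▸ h3]
  have h4 : 1 / t * ((2 * t * P - 2 * t ^ 2 * c i j) / ω) ≤ 1 / t * (1 - W / ω) :=
    mul_le_mul_of_nonneg_left h1 (by positivity)
  have h5 : 1 / t * ((2 * t * P - 2 * t ^ 2 * c i j) / ω)
      = 2 * P / ω - 2 * t * c i j / ω := by
    field_simp
  have h6 : linkCurv G c Qd i j = 2 * P / ω := by
    simp only [linkCurv, hPdef, hωdef]
  rw [h6]
  linarith
  
include hsymm hpos hconn hQd in
lemma gupper (hij : G.Adj i j) (hcut : IsCutLink G i j) (t : ℝ) (ht : 0 < t)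
    (hdeg : ∀ v : V, t * deg G c v ≤ 1) :
    1 / t * (1 -
        wasserstein1 (resMatrix Qd)
          (((1 : Matrix V V ℝ) - t • lapMatrix G c) *ᵥ Pi.single i 1)
          (((1 : Matrix V V ℝ) - t • lapMatrix G c) *ᵥ Pi.single j 1) /
        effRes Qd i j) ≤ linkCurv G c Qd i j := by
  have hij' : i ≠ j := G.ne_of_adj hij
  have hω : 0 < effRes Qd i j := effRes_pos G hsymm hpos hconn hQd hij'
  have hB := partB G hsymm hpos hconn hQd hij hcut t ht.le hdeg
  set W := wasserstein1 (resMatrix Qd)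
    (((1 : Matrix V V ℝ) - t • lapMatrix G c) *ᵥ Pi.single i 1)
    (((1 : Matrix V V ℝ) - t • lapMatrix G c) *ᵥ Pi.single j 1) with hWdef
  set ω := effRes Qd i j with hωdef
  set P : ℝ := nodeCurv G c Qd i + nodeCurv G c Qd j with hPdef
  have h1 : 1 - W / ω ≤ 2 * t * P / ω := by
    have h2 : 1 - W / ω - 2 * t * P / ω = (ω - W - 2 * t * P) / ω := by
      field_simp
    have h3 : (ω - W - 2 * t * P) / ω ≤ 0 :=
      div_nonpos_of_nonpos_of_nonneg (by linarith) hω.le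
    linarith [h2 ▸ h3]
  have h4 : 1 / t * (1 - W / ω) ≤ 1 / t * (2 * t * P / ω) :=
    mul_le_mul_of_nonneg_left h1 (by positivity)
  have h5 : 1 / t * (2 * t * P / ω) = 2 * P / ω := by
    field_simp
  have h6 : linkCurv G c Qd i j = 2 * P / ω := by
    simp only [linkCurv, hPdef, hωdef]
  rw [h6]
  linarith

end Limits

theorem ollivier_ricci_vs_linkCurv
    [Fintype V] [DecidableEq V] (G : SimpleGraph V) [DecidableRel G.Adj]
    (c : V → V → ℝ) (hsymm : ∀ i j, c i j = c j i)
    (hpos : ∀ i j, G.Adj i j → 0 < c i j)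
    (hconn : G.Connected)
    (Qd : Matrix V V ℝ) (hQd : IsMoorePenroseInv (lapMatrix G c) Qd)
    (i j : V) (hij : G.Adj i j) :
    (∀ t : ℝ, 0 ≤ t → (∀ v : V, t * ∑ k, (if G.Adj v k then c v k else 0) ≤ 1) →
      wasserstein1 (resMatrix Qd) (((1 : Matrix V V ℝ) - t • lapMatrix G c) *ᵥ Pi.single i 1) (((1 : Matrix V V ℝ) - t • lapMatrix G c) *ᵥ Pi.single j 1) ≤
        effRes Qd i j - 2 * t * (nodeCurv G c Qd i + nodeCurv G c Qd j) +
          2 * t ^ 2 * c i j) ∧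
    (IsCutLink G i j →
      ∀ t : ℝ, 0 ≤ t → (∀ v : V, t * ∑ k, (if G.Adj v k then c v k else 0) ≤ 1) →
        effRes Qd i j - 2 * t * (nodeCurv G c Qd i + nodeCurv G c Qd j) ≤
          wasserstein1 (resMatrix Qd) (((1 : Matrix V V ℝ) - t • lapMatrix G c) *ᵥ Pi.single i 1) (((1 : Matrix V V ℝ) - t • lapMatrix G c) *ᵥ Pi.single j 1)) ∧
    (∀ L : ℝ,
      Filter.Tendsto (fun t : ℝ =>
          1 / t * (1 -
            wasserstein1 (resMatrix Qd)
              (((1 : Matrix V V ℝ) - t • lapMatrix G c) *ᵥ Pi.single i 1)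
              (((1 : Matrix V V ℝ) - t • lapMatrix G c) *ᵥ Pi.single j 1) /
            effRes Qd i j))
        (nhdsWithin 0 (Set.Ioi 0)) (nhds L) →
      linkCurv G c Qd i j ≤ L) ∧
    (IsCutLink G i j →
      Filter.Tendsto (fun t : ℝ =>
          1 / t * (1 -
            wasserstein1 (resMatrix Qd)
              (((1 : Matrix V V ℝ) - t • lapMatrix G c) *ᵥ Pi.single i 1)
              (((1 : Matrix V V ℝ) - t • lapMatrix G c) *ᵥ Pi.single j 1) /
            effRes Qd i j))
        (nhdsWithin 0 (Set.Ioi 0)) (nhds (linkCurv G c Qd i j))) := by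
  have hdeg_eq : ∀ (v : V), (∑ k, (if G.Adj v k then c v k else 0)) = deg G c v := by
    intro v
    exact Finset.sum_congr rfl fun k _ => by by_cases hA : G.Adj v k <;> simp [cc, deg, hA]
  have hij' : i ≠ j := G.ne_of_adj hij
  have hω : 0 < effRes Qd i j := effRes_pos G hsymm hpos hconn hQd hij'
  -- uniform bound on t
  obtain ⟨vm, _, hvm⟩ := Finset.exists_max_image (Finset.univ : Finset V) (deg G c)
    ⟨i, Finset.mem_univ i⟩
  have hdegi : 0 < deg G c i := by
    have h1 : cc G c i j ≤ deg G c i :=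
      Finset.single_le_sum (f := cc G c i) (fun k _ => cc_nonneg G hpos i k)
        (Finset.mem_univ j)
    have h2 : 0 < cc G c i j := by
      rw [show cc G c i j = c i j from by unfold cc; exact if_pos hij]
      exact hpos _ _ hij
    linarith
  have hKpos : 0 < deg G c vm := lt_of_lt_of_le hdegi (hvm i (Finset.mem_univ i))
  have hdegK : ∀ t ∈ Set.Ioc (0:ℝ) (deg G c vm)⁻¹, ∀ v : V, t * deg G c v ≤ 1 := by
    intro t ht v
    have hd0 : 0 ≤ deg G c v :=
      Finset.sum_nonneg fun k _ => cc_nonneg G hpos v k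
    calc t * deg G c v ≤ (deg G c vm)⁻¹ * deg G c v :=
          mul_le_mul_of_nonneg_right ht.2 hd0
      _ ≤ (deg G c vm)⁻¹ * deg G c vm :=
          mul_le_mul_of_nonneg_left (hvm v (Finset.mem_univ v)) (by positivity)
      _ = 1 := inv_mul_cancel₀ hKpos.ne'
  have hmem : Set.Ioc (0:ℝ) (deg G c vm)⁻¹ ∈ nhdsWithin (0:ℝ) (Set.Ioi 0) :=
    Ioc_mem_nhdsGT_of_mem (by constructor <;> simp [hKpos])
  have hφ : Filter.Tendsto
      (fun t : ℝ => linkCurv G c Qd i j - 2 * t * c i j / effRes Qd i j)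
      (nhdsWithin 0 (Set.Ioi 0)) (nhds (linkCurv G c Qd i j)) := by
    have h : Filter.Tendsto
        (fun t : ℝ => linkCurv G c Qd i j - 2 * t * c i j / effRes Qd i j)
        (nhds 0) (nhds (linkCurv G c Qd i j - 2 * 0 * c i j / effRes Qd i j)) := by
      apply Filter.Tendsto.sub tendsto_const_nhds
      exact ((Filter.Tendsto.const_mul 2 Filter.tendsto_id).mul_const (c i j)).div_const (effRes Qd i j)
    simpa using h.mono_left nhdsWithin_le_nhds
  have hlow : ∀ t ∈ Set.Ioc (0:ℝ) (deg G c vm)⁻¹,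
      linkCurv G c Qd i j - 2 * t * c i j / effRes Qd i j ≤
        1 / t * (1 -
          wasserstein1 (resMatrix Qd)
            (((1 : Matrix V V ℝ) - t • lapMatrix G c) *ᵥ Pi.single i 1)
            (((1 : Matrix V V ℝ) - t • lapMatrix G c) *ᵥ Pi.single j 1) /
          effRes Qd i j) :=
    fun t ht => glower G hsymm hpos hconn hQd hij t ht.1 (hdegK t ht)
  refine ⟨?_, ?_, ?_, ?_⟩
  · intro t ht hsum
    exact partA G hsymm hpos hconn hQd hij t ht
      (fun v => by rw [← hdeg_eq v]; exact hsum v)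
  · intro hcut t ht hsum
    exact partB G hsymm hpos hconn hQd hij hcut t ht
      (fun v => by rw [← hdeg_eq v]; exact hsum v)
  · intro L hL
    exact le_of_tendsto_of_tendsto hφ hL (Filter.eventually_of_mem hmem hlow)
  · intro hcut
    have hup : ∀ t ∈ Set.Ioc (0:ℝ) (deg G c vm)⁻¹,
        1 / t * (1 -
          wasserstein1 (resMatrix Qd)
            (((1 : Matrix V V ℝ) - t • lapMatrix G c) *ᵥ Pi.single i 1)
            (((1 : Matrix V V ℝ) - t • lapMatrix G c) *ᵥ Pi.single j 1) /
          effRes Qd i j) ≤ linkCurv G c Qd i j :=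
      fun t ht => gupper G hsymm hpos hconn hQd hij hcut t ht.1 (hdegK t ht)
    exact tendsto_of_tendsto_of_tendsto_of_le_of_le' hφ tendsto_const_nhds
      (Filter.eventually_of_mem hmem hlow) (Filter.eventually_of_mem hmem hup)
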